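/- For all n > 0, 2·(sum over j from 0 to n−2 of f(j)·f(j+2)) + f(n−1)^2 = f(n)·f(n+1) − 1, where f is the shifted Fibonacci sequence with f(0)=f(1)=1. -/
import Mathlib

def f : ℕ → ℕ
  | 0 => 1
  | 1 => 1
  | n + 2 => f (n + 1) + f n

lemma aux (m : ℕ) :
    2 * (∑ j ∈ Finset.range m, f j * f (j + 2)) + (f m) ^ 2 + 1
      = f (m + 1) * f (m + 2) := by
  induction m with
  | zero => simp [f]
  | succ m ih =>
    rw [Finset.sum_range_succ]
    have h2 : f (m + 2) = f (m + 1) + f m := rfl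
    have h3 : f (m + 3) = f (m + 2) + f (m + 1) := rfl
    nlinarith [ih]

theorem stmt5 (n : ℕ) (hn : 0 < n) :
    2 * (∑ j ∈ Finset.range (n - 1), f j * f (j + 2)) + (f (n - 1)) ^ 2
      = f n * f (n + 1) - 1 := by
  obtain ⟨m, rfl⟩ := Nat.exists_eq_add_of_lt hn
  have h := aux m
  simp only [Nat.zero_add, Nat.add_sub_cancel]
  show _ = f (m + 1) * f (m + 2) - 1
  omega
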